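/- arXiv:2209.03003 — 3 statements merged into one kernel-verified Lean document; each statement's English description precedes it below -/
import Mathlib

section
/- Let Z^k denote the k-th rectified flow of (X₀,X₁), i.e., Z^{k+1} = RectifyFlow((Z₀^k, Z₁^k)) with (Z₀⁰, Z₁⁰) = (X₀, X₁), each coupling rectifiable. Then min_{0 ≤ k ≤ K} S(Z^k) ≤ E[‖X₁ − X₀‖²] / K, where S(Z) = ∫₀¹ E[‖(Z₁−Z₀) − Ż_t‖²]dt. -/
open MeasureTheory Set intervalIntegral

/-! Summing the energy identity over `k < K` telescopes: since the crossing variances and the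
transport costs are nonnegative, `S(Z¹) + ⋯ + S(Zᴷ) ≤ E[‖X₁ - X₀‖²]`, and the smallest of `K`
terms is at most their average. -/

theorem sum_range_succ_le_of_sub_succ_eq {E S V : ℕ → ℝ} (hV : ∀ k, 0 ≤ V k) (hE : ∀ k, 0 ≤ E k)
    (hid : ∀ k, E k - E (k + 1) = S (k + 1) + V k) (K : ℕ) :
    ∑ k ∈ Finset.range K, S (k + 1) ≤ E 0 :=
  calc ∑ k ∈ Finset.range K, S (k + 1)
      ≤ ∑ k ∈ Finset.range K, (E k - E (k + 1)) :=
        Finset.sum_le_sum fun k _ => by linarith [hid k, hV k]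
    _ = E 0 - E K := Finset.sum_range_sub' E K
    _ ≤ E 0 := by linarith [hE K]

theorem Finset.exists_le_div_card_of_sum_le {ι : Type*} {s : Finset ι} (hs : s.Nonempty)
    {f : ι → ℝ} {C : ℝ} (h : ∑ i ∈ s, f i ≤ C) : ∃ i ∈ s, f i ≤ C / s.card := by
  refine Finset.exists_le_of_sum_le hs ?_
  rwa [Finset.sum_const, nsmul_eq_mul, mul_div_cancel₀ _ (by exact_mod_cast hs.card_pos.ne')]

theorem stmt5_general {d : ℕ} {Ω : Type*} [MeasurableSpace Ω] {P : Measure Ω}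
    (X₀ X₁ : Ω → EuclideanSpace ℝ (Fin d))
    (Z : ℕ → Ω → ℝ → EuclideanSpace ℝ (Fin d))
    -- `Z 0` is the linear interpolation process of the data coupling `(X₀, X₁)`
    (hZ0 : ∀ ω t, Z 0 ω t = t • X₁ ω + (1 - t) • X₀ ω)
    -- straightness measure of the `k`-th rectified flow
    (S : ℕ → ℝ)
    -- each rectification step satisfies the energy identity with `V k ≥ 0`
    (V : ℕ → ℝ) (hV : ∀ k, 0 ≤ V k)
    (hid : ∀ k, (∫ ω, ‖Z k ω 1 - Z k ω 0‖ ^ 2 ∂P)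
        - (∫ ω, ‖Z (k + 1) ω 1 - Z (k + 1) ω 0‖ ^ 2 ∂P) = S (k + 1) + V k)
    (K : ℕ) (hK : 0 < K) :
    ∃ k ≤ K, S k ≤ (∫ ω, ‖X₁ ω - X₀ ω‖ ^ 2 ∂P) / K := by
  have hcost_zero : (∫ ω, ‖Z 0 ω 1 - Z 0 ω 0‖ ^ 2 ∂P) = ∫ ω, ‖X₁ ω - X₀ ω‖ ^ 2 ∂P := by
    simp [hZ0]
  have hsum := sum_range_succ_le_of_sub_succ_eq hV
    (fun k => integral_nonneg fun ω => sq_nonneg ‖Z k ω 1 - Z k ω 0‖) hid K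
  rw [hcost_zero] at hsum
  obtain ⟨k, hk, hSk⟩ :=
    Finset.exists_le_div_card_of_sum_le (Finset.nonempty_range_iff.mpr hK.ne') hsum
  rw [Finset.card_range] at hSk
  exact ⟨k + 1, Finset.mem_range.mp hk, hSk⟩

/-- O(1/K) convergence of the straightness measure under recursive rectification
(Theorem 3.7): if `Z k` is the `k`-th rectified flow of `(X₀, X₁)` (with `Z 0`
the linear interpolation of the initial coupling) and each rectification step
satisfies the energy identity with a nonnegative crossing variance `V k`, then
`min_{0 ≤ k ≤ K} S(Z^k) ≤ E[‖X₁ - X₀‖²] / K`. -/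
theorem stmt5 {d : ℕ} {Ω : Type*} [MeasurableSpace Ω] {P : Measure Ω}
    [IsProbabilityMeasure P]
    (X₀ X₁ : Ω → EuclideanSpace ℝ (Fin d))
    (hX : Integrable (fun ω => ‖X₁ ω - X₀ ω‖ ^ 2) P)
    (Z dZ : ℕ → Ω → ℝ → EuclideanSpace ℝ (Fin d))
    -- `Z 0` is the linear interpolation process of the data coupling `(X₀, X₁)`
    (hZ0 : ∀ ω t, Z 0 ω t = t • X₁ ω + (1 - t) • X₀ ω)
    (hderiv : ∀ k ω, ∀ t ∈ Icc (0:ℝ) 1,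
      HasDerivWithinAt (Z k ω) (dZ k ω t) (Icc (0:ℝ) 1) t)
    -- straightness measure of the `k`-th rectified flow
    (S : ℕ → ℝ)
    (hS : ∀ k, S k = ∫ t in (0:ℝ)..1, ∫ ω, ‖(Z k ω 1 - Z k ω 0) - dZ k ω t‖ ^ 2 ∂P)
    -- each rectification step satisfies the energy identity with `V k ≥ 0`
    (V : ℕ → ℝ) (hV : ∀ k, 0 ≤ V k)
    (hid : ∀ k, (∫ ω, ‖Z k ω 1 - Z k ω 0‖ ^ 2 ∂P)
        - (∫ ω, ‖Z (k + 1) ω 1 - Z (k + 1) ω 0‖ ^ 2 ∂P) = S (k + 1) + V k)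
    (hSnonneg : ∀ k, 0 ≤ S k)
    (hcost_nonneg : ∀ k, 0 ≤ ∫ ω, ‖Z k ω 1 - Z k ω 0‖ ^ 2 ∂P)
    (K : ℕ) (hK : 0 < K) :
    ∃ k ≤ K, S k ≤ (∫ ω, ‖X₁ ω - X₀ ω‖ ^ 2 ∂P) / K :=
  stmt5_general X₀ X₁ Z hZ0 S V hV hid K hK
end

section
/- A coupling (X₀, X₁) on ℝ that is deterministic and monotonic is straight: the linear interpolation paths X_t = tX₁ + (1−t)X₀ do not intersect, i.e., X₁ − X₀ = E[X₁ − X₀ | X_t] almost surely for every t ∈ [0,1). -/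
/-!
Since `X₁ = T ∘ X₀`, the interpolant is `X_t = f_t ∘ X₀` with `f_t x = t T x + (1 - t) x`,
which is strictly increasing for `t < 1` because `T` is monotone. A strictly monotone
measurable map of `ℝ` is a measurable embedding, so `X_t` and `X₀` generate the same
σ-algebra. The displacement `X₁ - X₀ = (T - id) ∘ X₀` is measurable for it, hence equal to its
own conditional expectation.
-/

open MeasureTheory Set

lemma strictMono_interpolation {T : ℝ → ℝ} (hT : Monotone T) {t : ℝ} (ht : t ∈ Ico (0 : ℝ) 1) :
    StrictMono fun x => t * T x + (1 - t) * x :=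
  (hT.const_mul ht.1).add_strictMono (strictMono_mul_left_of_pos (sub_pos.2 ht.2))

lemma MeasurableEmbedding.comap_comp {α β γ : Type*} [MeasurableSpace β] [MeasurableSpace γ]
    {f : β → γ} (hf : MeasurableEmbedding f) (X : α → β) :
    MeasurableSpace.comap (f ∘ X) ‹MeasurableSpace γ› = MeasurableSpace.comap X ‹_› := by
  rw [← MeasurableSpace.comap_comp, hf.comap_eq]

lemma condExp_comp_comap {Ω β E : Type*} {mΩ : MeasurableSpace Ω} [MeasurableSpace β]
    [NormedAddCommGroup E] [NormedSpace ℝ E] [CompleteSpace E]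
    {P : Measure Ω} [IsFiniteMeasure P] {Y : Ω → β} (hY : Measurable Y) {h : β → E}
    (hh : StronglyMeasurable h) (hint : Integrable (h ∘ Y) P) :
    P[h ∘ Y | MeasurableSpace.comap Y ‹_›] = h ∘ Y :=
  condExp_of_stronglyMeasurable hY.comap_le (hh.comp_measurable (Measurable.of_comap_le le_rfl))
    hint

/-- A deterministic monotone coupling `(X₀, X₁ = T ∘ X₀)` on `ℝ` is straight: for
every `t ∈ [0,1)`, `X₁ - X₀ = E[X₁ - X₀ | X_t]` almost surely, where
`X_t = t X₁ + (1-t) X₀`. -/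
theorem stmt9 {Ω : Type*} [MeasurableSpace Ω] {P : Measure Ω}
    [IsProbabilityMeasure P]
    (X₀ X₁ : Ω → ℝ) (hX₀m : Measurable X₀)
    (hX₀ : Integrable X₀ P) (hX₁ : Integrable X₁ P)
    (T : ℝ → ℝ) (hT : Monotone T) (hX₁T : ∀ ω, X₁ ω = T (X₀ ω)) :
    ∀ t ∈ Ico (0:ℝ) 1,
      (fun ω => X₁ ω - X₀ ω)
        =ᵐ[P] P[(fun ω => X₁ ω - X₀ ω) |
          MeasurableSpace.comap (fun ω => t * X₁ ω + (1 - t) * X₀ ω) (borel ℝ)] := by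
  intro t ht
  have hTm : Measurable T := hT.measurable
  have hemb : MeasurableEmbedding fun x => t * T x + (1 - t) * x :=
    (by fun_prop : Measurable fun x => t * T x + (1 - t) * x).measurableEmbedding
      (strictMono_interpolation hT ht).injective
  have hXt : (fun ω => t * X₁ ω + (1 - t) * X₀ ω) = (fun x => t * T x + (1 - t) * x) ∘ X₀ := by
    funext ω; simp [hX₁T]
  have hdiff : (fun ω => X₁ ω - X₀ ω) = (fun x => T x - x) ∘ X₀ := by
    funext ω; simp [hX₁T]
  have hint : Integrable ((fun x => T x - x) ∘ X₀) P := hdiff ▸ hX₁.sub hX₀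
  have hdiffm : StronglyMeasurable fun x => T x - x := (hTm.sub measurable_id).stronglyMeasurable
  rw [← BorelSpace.measurable_eq, hXt, hemb.comap_comp, hdiff,
    condExp_comp_comap hX₀m hdiffm hint]
end

section
/- Let c : ℝ^d → ℝ be strictly convex and let Y be an integrable random vector with σ-algebra 𝒢. If E[c(Y)] = E[c(E[Y|𝒢])], then Y = E[Y|𝒢] almost surely. -/
/-! Put `Z = 𝔼[Y|m]` and let `W` be the midpoint of `Y` and `Z`. Then `𝔼[W|m] = Z`, so conditional
Jensen and convexity give `∫ c(Z) ≤ ∫ c(W) ≤ (∫ c(Y) + ∫ c(Z)) / 2 = ∫ c(Z)`. Hence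
`c(W) = (c(Y) + c(Z)) / 2` almost surely, which strict convexity only allows where `Y = Z`.
The integrability of `c(Z)` and `c(W)` follows from the same upper bounds together with an affine
minorant of `c`. -/

open MeasureTheory Set

section Midpoint

variable {E : Type*} [AddCommGroup E] [Module ℝ E] {s : Set E} {φ : E → ℝ} {x y : E}

theorem ConvexOn.map_midpoint_le (hφ : ConvexOn ℝ s φ) (hx : x ∈ s) (hy : y ∈ s) :
    φ (midpoint ℝ x y) ≤ (φ x + φ y) / 2 := by
  have h := hφ.2 hx hy (by norm_num : (0 : ℝ) ≤ 2⁻¹) (by norm_num : (0 : ℝ) ≤ 2⁻¹) (by norm_num)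
  rw [midpoint_eq_smul_add, invOf_eq_inv, smul_add]
  simp only [smul_eq_mul] at h
  linarith

theorem StrictConvexOn.map_midpoint_lt (hφ : StrictConvexOn ℝ s φ) (hx : x ∈ s) (hy : y ∈ s)
    (hxy : x ≠ y) : φ (midpoint ℝ x y) < (φ x + φ y) / 2 := by
  have h := hφ.2 hx hy hxy (by norm_num : (0 : ℝ) < 2⁻¹) (by norm_num : (0 : ℝ) < 2⁻¹)
    (by norm_num)
  rw [midpoint_eq_smul_add, invOf_eq_inv, smul_add]
  simp only [smul_eq_mul] at h
  linarith

end Midpoint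

section ConditionalJensen

variable {E : Type*} [NormedAddCommGroup E] [NormedSpace ℝ E] {φ : E → ℝ}

theorem ConvexOn.exists_affine_le (hφ : ConvexOn ℝ univ φ) (hφc : LowerSemicontinuous φ) :
    ∃ (l : E →L[ℝ] ℝ) (b : ℝ), ∀ x, l x + b ≤ φ x := by
  obtain ⟨l, b, hle, -⟩ := hφ.exists_affine_le_of_lt (𝕜 := ℝ) (x := 0) (a := φ 0 - 1)
    (mem_univ _) (by linarith) isClosed_univ (lowerSemicontinuousOn_univ_iff.2 hφc)
  exact ⟨l, b, fun x => by simpa using hle ⟨x, mem_univ x⟩⟩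

variable {Ω : Type*} {m m0 : MeasurableSpace Ω} {μ : Measure Ω}

theorem ConvexOn.integrable_comp_of_ae_le [IsFiniteMeasure μ] (hφ : ConvexOn ℝ univ φ)
    (hφc : Continuous φ) {X : Ω → E} {g : Ω → ℝ} (hX : Integrable X μ) (hg : Integrable g μ)
    (hle : ∀ᵐ ω ∂μ, φ (X ω) ≤ g ω) : Integrable (fun ω => φ (X ω)) μ := by
  obtain ⟨l, b, hlb⟩ := hφ.exists_affine_le hφc.lowerSemicontinuous
  exact integrable_of_le_of_le (hφc.comp_aestronglyMeasurable hX.1)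
    (Filter.Eventually.of_forall fun ω => hlb (X ω)) hle
    ((l.integrable_comp hX).add (integrable_const b)) hg

theorem condExp_midpoint_condExp [CompleteSpace E] (hm : m ≤ m0) [SigmaFinite (μ.trim hm)]
    {Y : Ω → E} (hY : Integrable Y μ) :
    μ[fun ω => midpoint ℝ (Y ω) (μ[Y|m] ω)|m] =ᵐ[μ] μ[Y|m] := by
  have hmid : (fun ω => midpoint ℝ (Y ω) (μ[Y|m] ω)) = (⅟2 : ℝ) • (Y + μ[Y|m]) := by
    ext1 ω
    exact midpoint_eq_smul_add (R := ℝ) _ _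
  have hcc : μ[μ[Y|m]|m] = μ[Y|m] :=
    condExp_of_stronglyMeasurable hm stronglyMeasurable_condExp integrable_condExp
  rw [hmid]
  filter_upwards [condExp_smul (⅟2 : ℝ) (Y + μ[Y|m]) m, condExp_add hY integrable_condExp m]
    with ω hsmul hadd
  rw [hsmul, Pi.smul_apply, hadd, Pi.add_apply, hcc, ← midpoint_eq_smul_add, midpoint_self]

theorem StrictConvexOn.ae_eq_condExp_of_integral_comp_eq [CompleteSpace E] [IsFiniteMeasure μ]
    (hm : m ≤ m0) (hφ : StrictConvexOn ℝ univ φ) (hφc : Continuous φ) {Y : Ω → E}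
    (hY : Integrable Y μ) (hφY : Integrable (fun ω => φ (Y ω)) μ)
    (heq : ∫ ω, φ (Y ω) ∂μ = ∫ ω, φ (μ[Y|m] ω) ∂μ) :
    Y =ᵐ[μ] μ[Y|m] := by
  set Z := μ[Y|m]
  set W := fun ω => midpoint ℝ (Y ω) (Z ω)
  have hW : Integrable W μ := by
    simp_rw [W, midpoint_eq_smul_add]
    exact (hY.add integrable_condExp).smul _
  have hjensenY : ∀ᵐ ω ∂μ, φ (Z ω) ≤ μ[fun ω => φ (Y ω)|m] ω :=
    hφ.convexOn.map_condExp_le_univ hm hφc.lowerSemicontinuous hY hφY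
  have hφZ : Integrable (fun ω => φ (Z ω)) μ :=
    hφ.convexOn.integrable_comp_of_ae_le hφc integrable_condExp integrable_condExp hjensenY
  have hW_le : ∀ ω, φ (W ω) ≤ (φ (Y ω) + φ (Z ω)) / 2 :=
    fun ω => hφ.convexOn.map_midpoint_le (mem_univ _) (mem_univ _)
  have hmean : Integrable (fun ω => (φ (Y ω) + φ (Z ω)) / 2) μ :=
    (hφY.add hφZ).div_const 2
  have hφW : Integrable (fun ω => φ (W ω)) μ :=
    hφ.convexOn.integrable_comp_of_ae_le hφc hW hmean (.of_forall hW_le)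
  have hjensenW : ∀ᵐ ω ∂μ, φ (Z ω) ≤ μ[fun ω => φ (W ω)|m] ω := by
    have hmid : μ[W|m] =ᵐ[μ] Z := condExp_midpoint_condExp hm hY
    filter_upwards [hφ.convexOn.map_condExp_le_univ hm hφc.lowerSemicontinuous hW hφW, hmid]
      with ω hle hω
    rw [Function.comp_apply, hω] at hle
    exact hle
  have hZ_le_W : ∫ ω, φ (Z ω) ∂μ ≤ ∫ ω, φ (W ω) ∂μ := by
    simpa [integral_condExp hm] using integral_mono_ae hφZ integrable_condExp hjensenW
  have hW_eq : (fun ω => φ (W ω)) =ᵐ[μ] fun ω => (φ (Y ω) + φ (Z ω)) / 2 := by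
    refine (integral_eq_iff_of_ae_le hφW hmean (.of_forall hW_le)).1 (le_antisymm
      (integral_mono hφW hmean hW_le) ?_)
    rw [integral_div, integral_add hφY hφZ, heq]
    linarith
  filter_upwards [hW_eq] with ω hω
  by_contra hne
  exact (hφ.map_midpoint_lt (mem_univ _) (mem_univ _) hne).ne hω

end ConditionalJensen

theorem stmt12_general {d : ℕ} {Ω : Type*} [m0 : MeasurableSpace Ω] {P : Measure Ω}
    [IsProbabilityMeasure P]
    (m : MeasurableSpace Ω) (hm : m ≤ m0)
    (Y : Ω → EuclideanSpace ℝ (Fin d)) (hY : Integrable Y P)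
    (c : EuclideanSpace ℝ (Fin d) → ℝ) (hc : StrictConvexOn ℝ Set.univ c)
    (hint₁ : Integrable (fun ω => c (Y ω)) P)
    (heq : ∫ ω, c (Y ω) ∂P = ∫ ω, c ((P[Y|m]) ω) ∂P) :
    Y =ᵐ[P] P[Y|m] :=
  hc.ae_eq_condExp_of_integral_comp_eq hm
    (continuousOn_univ.1 (hc.convexOn.continuousOn isOpen_univ)) hY hint₁ heq

/-- Equality in the conditional Jensen inequality for a strictly convex function
forces the random vector to equal its conditional expectation almost surely. -/
theorem stmt12 {d : ℕ} {Ω : Type*} [m0 : MeasurableSpace Ω] {P : Measure Ω}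
    [IsProbabilityMeasure P]
    (m : MeasurableSpace Ω) (hm : m ≤ m0)
    (Y : Ω → EuclideanSpace ℝ (Fin d)) (hY : Integrable Y P)
    (c : EuclideanSpace ℝ (Fin d) → ℝ) (hc : StrictConvexOn ℝ Set.univ c)
    (hint₁ : Integrable (fun ω => c (Y ω)) P)
    (hint₂ : Integrable (fun ω => c ((P[Y|m]) ω)) P)
    (heq : ∫ ω, c (Y ω) ∂P = ∫ ω, c ((P[Y|m]) ω) ∂P) :
    Y =ᵐ[P] P[Y|m] :=
  stmt12_general (m0 := m0) m hm Y hY c hc hint₁ heq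
end
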